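/- arXiv:2206.05334 — 12 statements merged into one kernel-verified Lean document; each statement's English description precedes it below -/
import Mathlib

section
/- For any real θ and positive integers n, k with 0 ≤ k < n, the average (1/n) ∑_{ℓ=0}^{n-1} (cos((θ+ℓπ)/n))^{2k} equals (1/4^k)·C(2k,k), where C denotes the binomial coefficient. -/
/-!
Write `e_ℓ = exp (i (θ + ℓπ)/n)`, so that `2 cos ((θ + ℓπ)/n) = e_ℓ + e_ℓ⁻¹` and
`e_ℓ² = exp (2iθ/n) ζ^ℓ` with `ζ = exp (2πi/n)` a primitive `n`-th root of unity. Expanding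
`(e + e⁻¹)^(2k)` binomially gives `∑ⱼ C(2k,j) (e²)^(j-k)`; summing over `ℓ`, the terms with
`j ≠ k` become geometric sums of the root of unity `ζ^(j-k) ≠ 1` (as `0 < |j - k| ≤ k < n`) and
vanish, leaving `n · C(2k,k)`.
-/

open Real Finset

section Field

variable {K : Type*} [Field K]

theorem IsPrimitiveRoot.geom_sum_zpow_eq_zero {ζ : K} {n : ℕ} (hζ : IsPrimitiveRoot ζ n)
    {d : ℤ} (hd : ¬ (n : ℤ) ∣ d) : ∑ ℓ ∈ range n, (ζ ^ d) ^ ℓ = 0 := by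
  have hne : ζ ^ d ≠ 1 := by rwa [Ne, hζ.zpow_eq_one_iff_dvd]
  rw [geom_sum_eq hne, ← zpow_natCast, ← zpow_mul, mul_comm, zpow_mul, hζ.zpow_eq_one,
    one_zpow, sub_self, zero_div]

theorem add_inv_pow_two_mul_eq_sum {e : K} (he : e ≠ 0) (k : ℕ) :
    (e + e⁻¹) ^ (2 * k)
      = ∑ j ∈ range (2 * k + 1), ((2 * k).choose j : K) * (e ^ 2) ^ ((j : ℤ) - k) := by
  rw [add_pow]
  refine sum_congr rfl fun j hj => ?_
  have hj : j ≤ 2 * k := Nat.lt_succ_iff.mp (mem_range.mp hj)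
  rw [mul_comm, ← zpow_natCast, ← zpow_natCast, inv_zpow', ← zpow_add₀ he,
    ← zpow_natCast e 2, ← zpow_mul]
  congr 2
  push_cast [Nat.cast_sub hj]
  ring

theorem sum_add_inv_pow_two_mul_eq {ζ a : K} {n k : ℕ} (hζ : IsPrimitiveRoot ζ n) (hk : k < n)
    (e : ℕ → K) (he : ∀ ℓ, e ℓ ≠ 0) (he_sq : ∀ ℓ, e ℓ ^ 2 = a * ζ ^ ℓ) :
    ∑ ℓ ∈ range n, (e ℓ + (e ℓ)⁻¹) ^ (2 * k) = n * (2 * k).choose k := by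
  have h_sq_zpow (ℓ : ℕ) (d : ℤ) : (e ℓ ^ 2) ^ d = a ^ d * (ζ ^ d) ^ ℓ := by
    rw [he_sq, mul_zpow, ← zpow_natCast, ← zpow_natCast, ← zpow_mul, ← zpow_mul, mul_comm d]
  calc ∑ ℓ ∈ range n, (e ℓ + (e ℓ)⁻¹) ^ (2 * k)
      = ∑ j ∈ range (2 * k + 1), ((2 * k).choose j : K) * a ^ ((j : ℤ) - k) *
          ∑ ℓ ∈ range n, (ζ ^ ((j : ℤ) - k)) ^ ℓ := by
        simp_rw [add_inv_pow_two_mul_eq_sum (he _), h_sq_zpow, mul_sum, ← mul_assoc]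
        exact sum_comm
    _ = ((2 * k).choose k : K) * a ^ ((k : ℤ) - k) * ∑ ℓ ∈ range n, (ζ ^ ((k : ℤ) - k)) ^ ℓ := by
        refine sum_eq_single_of_mem k (mem_range.mpr (by omega)) fun j hj hjk => ?_
        have hj : j < 2 * k + 1 := mem_range.mp hj
        have hd : ¬ (n : ℤ) ∣ (j : ℤ) - k := fun hdvd =>
          hjk (by have := Int.eq_zero_of_abs_lt_dvd hdvd (abs_lt.mpr ⟨by omega, by omega⟩); omega)
        rw [hζ.geom_sum_zpow_eq_zero hd, mul_zero]
    _ = n * (2 * k).choose k := by simp [mul_comm]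

end Field

theorem Complex.ofReal_cos_pow_two_mul (y : ℝ) (k : ℕ) :
    (Real.cos y : ℂ) ^ (2 * k)
      = (exp (y * I) + (exp (y * I))⁻¹) ^ (2 * k) / 4 ^ k := by
  rw [← exp_neg, ← neg_mul, ← two_cos, ofReal_cos, mul_pow, pow_mul (2 : ℂ)]
  norm_num

theorem stmt_0 (θ : ℝ) (n k : ℕ) (hn : 0 < n) (hk : k < n) :
    (1 / (n : ℝ)) * ∑ ℓ ∈ Finset.range n, (Real.cos ((θ + ℓ * Real.pi) / n)) ^ (2 * k)
      = (1 / 4 ^ k) * (Nat.choose (2 * k) k : ℝ) := by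
  have h_sum : ∑ ℓ ∈ range n, Real.cos ((θ + ℓ * π) / n) ^ (2 * k)
      = n * (2 * k).choose k / 4 ^ k := by
    apply Complex.ofReal_injective
    have h_sq (ℓ : ℕ) : Complex.exp (((θ + ℓ * π) / n : ℝ) * Complex.I) ^ 2
        = Complex.exp (2 * θ / n * Complex.I) * Complex.exp (2 * π * Complex.I / n) ^ ℓ := by
      have hn₀ : (n : ℂ) ≠ 0 := Nat.cast_ne_zero.mpr hn.ne'
      rw [← Complex.exp_nat_mul, ← Complex.exp_nat_mul, ← Complex.exp_add]
      congr 1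
      push_cast
      field_simp
    simp only [Complex.ofReal_sum, Complex.ofReal_pow, Complex.ofReal_cos_pow_two_mul]
    rw [← sum_div, sum_add_inv_pow_two_mul_eq (Complex.isPrimitiveRoot_exp n hn.ne') hk _
      (fun _ => Complex.exp_ne_zero _) h_sq]
    push_cast
    ring
  rw [h_sum]
  field_simp
end

section
/- For any real θ and positive integers n, k with 2n ≤ k < 3n, the average (1/n) ∑_{ℓ=0}^{n-1} (cos((θ+ℓπ)/n))^{2k} equals (1/4^k)·[C(2k,k) + 2·C(2k,k−n)·cos(2θ) + 2·C(2k,k−2n)·cos(4θ)]. -/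
/-!
Writing `u = exp (2 i x)`, one has `cos x ^ (2k) = 4⁻ᵏ ∑ⱼ C(2k, j) u ^ (j - k)`. For
`x = (θ + ℓπ) / n` the point `u` is `w ζ^ℓ` with `w = exp (2iθ / n)` and `ζ = exp (2πi / n)` a
primitive `n`-th root of unity, so averaging over `ℓ < n` keeps exactly the terms with
`n ∣ j - k`. When `2n ≤ k < 3n` these are `j - k ∈ {0, ±n, ±2n}`, where `w ^ (j - k)` is
`exp (±2iθ)` or `exp (±4iθ)`; pairing `j` with `2k - j` gives the cosines.
-/

open Real Finset

theorem IsPrimitiveRoot.geom_sum_zpow {K : Type*} [Field K] {ζ : K} {n : ℕ}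
    (hζ : IsPrimitiveRoot ζ n) (m : ℤ) :
    ∑ ℓ ∈ range n, (ζ ^ m) ^ ℓ = if (n : ℤ) ∣ m then (n : K) else 0 := by
  split_ifs with hdvd
  · simp [(hζ.zpow_eq_one_iff_dvd m).2 hdvd]
  · have hpow : (ζ ^ m) ^ n = 1 := by
      rw [← zpow_natCast, ← zpow_mul, mul_comm, zpow_mul, zpow_natCast, hζ.pow_eq_one, one_zpow]
    rw [geom_sum_eq (mt (hζ.zpow_eq_one_iff_dvd m).1 hdvd), hpow, sub_self, zero_div]

theorem filter_range_dvd_sub_eq_of_two_mul_le_of_lt {n k : ℕ} (h1 : 2 * n ≤ k) (h2 : k < 3 * n) :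
    (range (2 * k + 1)).filter (fun j : ℕ => (n : ℤ) ∣ (j : ℤ) - k) =
      {k - 2 * n, k - n, k, k + n, k + 2 * n} := by
  ext j
  simp only [mem_filter, mem_range, mem_insert, mem_singleton]
  constructor
  · rintro ⟨hj, c, hc⟩
    -- `|c| * n = |j - k| ≤ k < 3n`
    have hc_lt : c < 3 := by nlinarith
    have hc_gt : -3 < c := by nlinarith
    interval_cases c <;> omega
  · rintro (rfl | rfl | rfl | rfl | rfl)
    exacts [⟨by omega, -2, by omega⟩, ⟨by omega, -1, by omega⟩, ⟨by omega, 0, by omega⟩,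
      ⟨by omega, 1, by omega⟩, ⟨by omega, 2, by omega⟩]

namespace Complex

theorem cos_pow_two_mul (x : ℂ) (k : ℕ) :
    cos x ^ (2 * k) =
      (∑ j ∈ range (2 * k + 1), ((2 * k).choose j : ℂ) * exp (2 * x * I) ^ ((j : ℤ) - k)) /
        4 ^ k := by
  set u := exp (2 * x * I)
  have hu : u ≠ 0 := exp_ne_zero _
  have hsq : cos x ^ 2 = (u + 1) ^ 2 * u⁻¹ / 4 := by
    have : cos (2 * x) = (u + u⁻¹) / 2 := by
      rw [cos, neg_mul, exp_neg]
    rw [cos_sq, this]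
    field_simp
    ring
  have hterm : ∀ j ∈ range (2 * k + 1),
      u ^ j * 1 ^ (2 * k - j) * ((2 * k).choose j : ℂ) * u ^ (-(k : ℤ))
        = ((2 * k).choose j : ℂ) * u ^ ((j : ℤ) - k) := by
    intro j _
    rw [sub_eq_add_neg, zpow_add₀ hu, zpow_natCast]
    ring
  rw [pow_mul, hsq, div_pow, mul_pow, ← pow_mul, add_pow, sum_mul, inv_pow, ← zpow_natCast,
    ← zpow_neg, sum_congr rfl hterm]

theorem sum_range_cos_add_mul_pi_div_pow_two_mul (θ : ℂ) {n : ℕ} (hn : n ≠ 0) (k : ℕ) :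
    ∑ ℓ ∈ range n, cos ((θ + ℓ * π) / n) ^ (2 * k) =
      n / 4 ^ k * ∑ j ∈ (range (2 * k + 1)).filter (fun j : ℕ => (n : ℤ) ∣ (j : ℤ) - k),
        ((2 * k).choose j : ℂ) * exp (2 * θ * I / n) ^ ((j : ℤ) - k) := by
  set w := exp (2 * θ * I / n)
  set ζ := exp (2 * π * I / n)
  have hζ : IsPrimitiveRoot ζ n := isPrimitiveRoot_exp n hn
  have hsplit (ℓ : ℕ) : exp (2 * ((θ + ℓ * π) / n) * I) = w * ζ ^ ℓ := by
    rw [← exp_nat_mul, ← exp_add]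
    congr 1
    field_simp
  have hpow (ℓ : ℕ) (m : ℤ) : (w * ζ ^ ℓ) ^ m = w ^ m * (ζ ^ m) ^ ℓ := by
    rw [mul_zpow, ← zpow_natCast, ← zpow_natCast, ← zpow_mul, ← zpow_mul, mul_comm (ℓ : ℤ) m,
      mul_comm]
  simp_rw [cos_pow_two_mul, hsplit, hpow, ← sum_div]
  rw [sum_comm, sum_filter, div_eq_mul_inv, mul_comm]
  simp_rw [← mul_assoc, ← mul_sum, hζ.geom_sum_zpow, mul_sum]
  refine sum_congr rfl fun j _ => ?_
  split_ifs <;> ring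

theorem exp_div_natCast_zpow_natCast_mul {n : ℕ} (hn : n ≠ 0) (z : ℂ) (c : ℤ) :
    exp (z / n) ^ ((n : ℤ) * c) = exp (c * z) := by
  rw [zpow_mul, zpow_natCast, ← exp_nat_mul, mul_div_cancel₀ _ (Nat.cast_ne_zero.2 hn), exp_int_mul]

theorem sum_range_cos_add_mul_pi_div_pow_two_mul_of_two_mul_le_of_lt (θ : ℂ) {n k : ℕ}
    (hn : n ≠ 0) (h1 : 2 * n ≤ k) (h2 : k < 3 * n) :
    ∑ ℓ ∈ range n, cos ((θ + ℓ * π) / n) ^ (2 * k) =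
      n / 4 ^ k * ((2 * k).choose k + 2 * (2 * k).choose (k - n) * cos (2 * θ)
        + 2 * (2 * k).choose (k - 2 * n) * cos (4 * θ)) := by
  rw [sum_range_cos_add_mul_pi_div_pow_two_mul θ hn,
    filter_range_dvd_sub_eq_of_two_mul_le_of_lt h1 h2,
    sum_insert (by simp; omega), sum_insert (by simp; omega), sum_insert (by simp; omega),
    sum_insert (by simp; omega), sum_singleton]
  have e1 : ((k - 2 * n : ℕ) : ℤ) - k = n * (-2) := by omega
  have e2 : ((k - n : ℕ) : ℤ) - k = n * (-1) := by omega
  have e3 : (k : ℤ) - k = n * 0 := by omega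
  have e4 : ((k + n : ℕ) : ℤ) - k = n * 1 := by omega
  have e5 : ((k + 2 * n : ℕ) : ℤ) - k = n * 2 := by omega
  have s4 : (2 * k).choose (k + n) = (2 * k).choose (k - n) := by
    rw [← Nat.choose_symm (by omega)]; congr 1; omega
  have s5 : (2 * k).choose (k + 2 * n) = (2 * k).choose (k - 2 * n) := by
    rw [← Nat.choose_symm (by omega)]; congr 1; omega
  simp only [e1, e2, e3, e4, e5, exp_div_natCast_zpow_natCast_mul hn, Int.cast_zero, zero_mul,
    exp_zero, s4, s5]
  linear_combination (norm := ring_nf) -(n / 4 ^ k : ℂ) *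
    ((2 * k).choose (k - n) * two_cos (2 * θ) + (2 * k).choose (k - 2 * n) * two_cos (4 * θ))

end Complex

theorem stmt_2 (θ : ℝ) (n k : ℕ) (hn : 0 < n) (h1 : 2 * n ≤ k) (h2 : k < 3 * n) :
    (1 / (n : ℝ)) * ∑ ℓ ∈ Finset.range n, (Real.cos ((θ + ℓ * Real.pi) / n)) ^ (2 * k)
      = (1 / 4 ^ k) * ((Nat.choose (2 * k) k : ℝ)
          + 2 * (Nat.choose (2 * k) (k - n) : ℝ) * Real.cos (2 * θ)
          + 2 * (Nat.choose (2 * k) (k - 2 * n) : ℝ) * Real.cos (4 * θ)) := by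
  have hn' : (n : ℂ) ≠ 0 := Nat.cast_ne_zero.2 hn.ne'
  apply Complex.ofReal_injective
  push_cast
  rw [Complex.sum_range_cos_add_mul_pi_div_pow_two_mul_of_two_mul_le_of_lt θ hn.ne' h1 h2]
  field_simp
end

section
/- For any real θ and positive integers n, k with n ≤ k < 2n, the average (1/n) ∑_{ℓ=0}^{n-1} (sin((θ+ℓπ)/n))^{2k} equals (1/4^k)·[C(2k,k) + (−1)^n·2·C(2k,k−n)·cos(2θ)]. -/
/-!
Writing `u = exp (2 i x)`, one has `sin x ^ 2 = -(u - 1) ^ 2 / (4 u)`, so the binomial theorem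
expands `sin x ^ (2k)` into the Laurent monomials `u ^ (j - k)`, `0 ≤ j ≤ 2k`. At the nodes
`x = (θ + ℓπ) / n` we have `u = exp (2iθ/n) ζ ^ ℓ` with `ζ` a primitive `n`-th root of unity, and
summing over `ℓ` kills every monomial whose exponent is not divisible by `n`. Since `n ≤ k < 2n`,
only the exponents `-n, 0, n` survive: the middle one gives the constant term and the outer two
combine into `cos (2θ)`.
-/

open Real Finset

namespace IsPrimitiveRoot

variable {K : Type*} [Field K] {ζ : K} {n : ℕ}

theorem sum_mul_pow_zpow (hζ : IsPrimitiveRoot ζ n) (a : K) (c : ℤ) :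
    ∑ ℓ ∈ range n, (a * ζ ^ ℓ) ^ c = if (n : ℤ) ∣ c then n * a ^ c else 0 := by
  have hpow (ℓ : ℕ) : (a * ζ ^ ℓ) ^ c = a ^ c * (ζ ^ c) ^ ℓ := by
    rw [mul_zpow, ← zpow_natCast, ← zpow_natCast, ← zpow_mul, ← zpow_mul, mul_comm (ℓ : ℤ)]
  simp_rw [hpow, ← mul_sum]
  split_ifs with hc
  · simp [(hζ.zpow_eq_one_iff_dvd c).mpr hc, mul_comm]
  · have hcn : (ζ ^ c) ^ n = 1 := by
      rw [← zpow_natCast, ← zpow_mul, mul_comm, zpow_mul, hζ.zpow_eq_one, one_zpow]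
    rw [geom_sum_eq ((hζ.zpow_eq_one_iff_dvd c).not.mpr hc), hcn, sub_self, zero_div, mul_zero]

end IsPrimitiveRoot

theorem filter_range_dvd_sub_eq {n k : ℕ} (h1 : n ≤ k) (h2 : k < 2 * n) :
    {j ∈ range (2 * k + 1) | (n : ℤ) ∣ ((j : ℕ) : ℤ) - k} = {k - n, k, k + n} := by
  ext j
  simp only [mem_filter, mem_range, mem_insert, mem_singleton]
  constructor
  · rintro ⟨hj, m, hm⟩
    have hm_lt : m < 2 := by nlinarith
    have hm_gt : -2 < m := by nlinarith
    interval_cases m <;> omega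
  · rintro (rfl | rfl | rfl)
    · exact ⟨by omega, -1, by omega⟩
    · exact ⟨by omega, 0, by omega⟩
    · exact ⟨by omega, 1, by omega⟩

namespace Complex

theorem sin_pow_two_mul_eq_sum (z : ℂ) (k : ℕ) :
    sin z ^ (2 * k) = (-1 / 4) ^ k * ∑ j ∈ range (2 * k + 1),
      (-1) ^ j * ((2 * k).choose j : ℂ) * exp (2 * z * I) ^ ((j : ℤ) - k) := by
  have hsq : sin z ^ 2 = -1 / 4 * (exp (2 * z * I) - 1) ^ 2 * (exp (2 * z * I))⁻¹ := by
    have hw : exp (2 * z * I) = exp (z * I) ^ 2 := by rw [← exp_nat_mul]; push_cast; ring_nf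
    have hw0 : exp (z * I) ≠ 0 := exp_ne_zero _
    rw [hw, sin, neg_mul, exp_neg]
    field_simp
    ring_nf
    rw [I_sq]
    ring
  rw [pow_mul, hsq, mul_pow, mul_pow, ← pow_mul, sub_pow, mul_assoc, sum_mul]
  congr 1
  refine sum_congr rfl fun j _ => ?_
  rw [zpow_sub₀ (exp_ne_zero _), zpow_natCast, zpow_natCast, div_eq_mul_inv, one_pow, mul_one,
    pow_add, pow_mul, neg_one_sq, one_pow, mul_one, inv_pow]
  ring

theorem sum_sin_pow_two_mul (θ : ℂ) {n k : ℕ} (h1 : n ≤ k) (h2 : k < 2 * n) :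
    ∑ ℓ ∈ range n, sin ((θ + ℓ * π) / n) ^ (2 * k)
      = n / 4 ^ k * ((2 * k).choose k + (-1) ^ n * 2 * (2 * k).choose (k - n) * cos (2 * θ)) := by
  have hn : n ≠ 0 := by omega
  set a := exp (2 * θ / n * I)
  have hnode (ℓ : ℕ) : exp (2 * ((θ + ℓ * π) / n) * I) = a * exp (2 * π * I / n) ^ ℓ := by
    rw [← exp_nat_mul, ← exp_add]; congr 1; field_simp
  have ha : a ^ n = exp (2 * θ * I) := by
    rw [← exp_nat_mul]; congr 1; field_simp
  simp_rw [sin_pow_two_mul_eq_sum, hnode, ← mul_sum]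
  rw [sum_comm]
  simp_rw [← mul_sum, (isPrimitiveRoot_exp n hn).sum_mul_pow_zpow, mul_ite, mul_zero, sum_ite,
    sum_const_zero, add_zero, filter_range_dvd_sub_eq h1 h2]
  rw [sum_insert (by simp; omega), sum_pair (by omega),
    Nat.choose_symm_of_eq_add (show 2 * k = (k + n) + (k - n) by omega)]
  push_cast [h1]
  simp only [sub_self, zpow_zero, add_sub_cancel_left, sub_sub_cancel_left, zpow_neg,
    zpow_natCast, ha, cos]
  have hsign : (-1 : ℂ) ^ (k - n) = (-1) ^ (k + n) := by
    rw [show k + n = k - n + 2 * n by omega, pow_add, pow_mul, neg_one_sq, one_pow, mul_one]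
  have hk : (-1 / 4 : ℂ) ^ k * (-1) ^ k = 1 / 4 ^ k := by
    rw [← mul_pow]; norm_num [div_pow]
  have hkn : (-1 / 4 : ℂ) ^ k * (-1) ^ (k + n) = (-1) ^ n / 4 ^ k := by
    rw [pow_add, ← mul_assoc, hk]; ring
  rw [neg_mul, exp_neg, hsign]
  linear_combination
    (n * ((2 * k).choose (k - n) : ℂ) * ((exp (2 * θ * I))⁻¹ + exp (2 * θ * I))) * hkn
      + (n * ((2 * k).choose k : ℂ)) * hk

end Complex

theorem stmt_3_general (θ : ℝ) (n k : ℕ) (h1 : n ≤ k) (h2 : k < 2 * n) :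
    (1 / (n : ℝ)) * ∑ ℓ ∈ Finset.range n, (Real.sin ((θ + ℓ * Real.pi) / n)) ^ (2 * k)
      = (1 / 4 ^ k) * ((Nat.choose (2 * k) k : ℝ)
          + (-1) ^ n * 2 * (Nat.choose (2 * k) (k - n) : ℝ) * Real.cos (2 * θ)) := by
  have hn : (n : ℝ) ≠ 0 := by norm_cast; omega
  have hsum : ∑ ℓ ∈ range n, Real.sin ((θ + ℓ * π) / n) ^ (2 * k) = n / 4 ^ k *
      ((2 * k).choose k + (-1) ^ n * 2 * (2 * k).choose (k - n) * Real.cos (2 * θ)) := by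
    apply Complex.ofReal_injective
    push_cast
    exact Complex.sum_sin_pow_two_mul θ h1 h2
  rw [hsum]
  field_simp

theorem stmt_3 (θ : ℝ) (n k : ℕ) (hn : 0 < n) (h1 : n ≤ k) (h2 : k < 2 * n) :
    (1 / (n : ℝ)) * ∑ ℓ ∈ Finset.range n, (Real.sin ((θ + ℓ * Real.pi) / n)) ^ (2 * k)
      = (1 / 4 ^ k) * ((Nat.choose (2 * k) k : ℝ)
          + (-1) ^ n * 2 * (Nat.choose (2 * k) (k - n) : ℝ) * Real.cos (2 * θ)) :=
  stmt_3_general θ n k h1 h2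
end

section
/- For any real θ, (1/9)·∑_{ℓ=0}^{8} (sin((θ+ℓπ)/9))^{20} = (1/4^{10})·[C(20,10) − 2·C(20,1)·cos(2θ)]. -/
/-!
Writing `sin x = (e^{-ix} - e^{ix}) i / 2` and expanding by the binomial theorem, each
`sin ((θ + ℓπ) / N) ^ (2n)` becomes a combination of `exp (2i(k - n)θ / N) · (ζ ^ (k - n)) ^ ℓ`
with `ζ = e^{2πi/N}` a primitive `N`-th root of unity. Averaging over `ℓ < N` kills every
frequency with `N ∤ k - n`; for `n = 10`, `N = 9` only `k = 1, 10, 19` survive, and the two outer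
terms combine into `-2 C(20,1) cos 2θ`.
-/

open Real Finset

theorem IsPrimitiveRoot.sum_range_pow_zpow {K : Type*} [Field K] {ζ : K} {N : ℕ}
    (hζ : IsPrimitiveRoot ζ N) (j : ℤ) :
    ∑ ℓ ∈ range N, (ζ ^ j) ^ ℓ = if (N : ℤ) ∣ j then (N : K) else 0 := by
  split_ifs with hj
  · simp [(hζ.zpow_eq_one_iff_dvd j).mpr hj]
  · have hpow : (ζ ^ j) ^ N = 1 := by
      rw [← zpow_natCast, ← zpow_mul, mul_comm, zpow_mul, zpow_natCast, hζ.pow_eq_one, one_zpow]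
    rw [geom_sum_eq (mt (hζ.zpow_eq_one_iff_dvd j).mp hj), hpow, sub_self, zero_div]

namespace Complex

theorem sin_pow_two_mul (n : ℕ) (x : ℂ) :
    sin x ^ (2 * n) = (-1) ^ n / 4 ^ n *
      ∑ k ∈ range (2 * n + 1), (-1) ^ k * (2 * n).choose k * exp (2 * (k - n) * x * I) := by
  have hsin : sin x = (-exp (x * I) + exp (-x * I)) * I / 2 := by rw [sin]; ring
  have hI : (I / 2) ^ (2 * n) = (-1) ^ n / 4 ^ n := by
    rw [div_pow, pow_mul, pow_mul, I_sq]; norm_num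
  rw [hsin, mul_div_assoc, mul_pow, add_pow, hI, mul_comm]
  congr 1
  refine sum_congr rfl fun k hk => ?_
  have hk2n : k ≤ 2 * n := Nat.lt_succ_iff.mp (mem_range.mp hk)
  rw [neg_pow, ← exp_nat_mul, ← exp_nat_mul, mul_assoc ((-1) ^ k), ← exp_add, Nat.cast_sub hk2n]
  push_cast
  ring_nf

theorem sum_range_sin_add_mul_pi_div_pow_two_mul (n : ℕ) {N : ℕ} (hN : N ≠ 0) (θ : ℂ) :
    ∑ ℓ ∈ range N, sin ((θ + ℓ * π) / N) ^ (2 * n) =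
      N * ((-1) ^ n / 4 ^ n) * ∑ k ∈ range (2 * n + 1) with (N : ℤ) ∣ ((k : ℕ) : ℤ) - n,
        (-1) ^ k * (2 * n).choose k * exp (2 * (k - n) * θ / N * I) := by
  have hζ := isPrimitiveRoot_exp N hN
  have hexp (k ℓ : ℕ) : exp (2 * (k - n) * ((θ + ℓ * π) / N) * I) =
      exp (2 * (k - n) * θ / N * I) * (exp (2 * π * I / N) ^ ((k : ℤ) - n)) ^ ℓ := by
    rw [← zpow_natCast, ← zpow_mul, ← exp_int_mul, ← exp_add]
    congr 1
    push_cast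
    ring
  simp_rw [sin_pow_two_mul, hexp, ← mul_assoc, ← mul_sum]
  rw [sum_comm, mul_sum, mul_sum, sum_filter]
  refine sum_congr rfl fun k _ => ?_
  rw [← mul_sum, hζ.sum_range_pow_zpow]
  split_ifs <;> ring

end Complex

theorem stmt_4 (θ : ℝ) :
    (1 / 9 : ℝ) * ∑ ℓ ∈ Finset.range 9, (Real.sin ((θ + ℓ * Real.pi) / 9)) ^ 20
      = (1 / 4 ^ 10) * ((Nat.choose 20 10 : ℝ) - 2 * (Nat.choose 20 1 : ℝ) * Real.cos (2 * θ)) := by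
  have hfreq : {k ∈ range (2 * 10 + 1) | ((9 : ℕ) : ℤ) ∣ ((k : ℕ) : ℤ) - (10 : ℕ)} = {1, 10, 19} := by decide
  have h := Complex.sum_range_sin_add_mul_pi_div_pow_two_mul 10 (N := 9) (by norm_num) θ
  rw [hfreq, sum_insert (by decide), sum_insert (by decide), sum_singleton] at h
  norm_num only at h
  apply Complex.ofReal_injective
  push_cast
  rw [h, Complex.cos]
  norm_num [Nat.choose]
  ring_nf
end

section
/- For every positive integer n, (1/n)·∑_{ℓ=0}^{n-1} (cos((1+6ℓ)π/(6n)))^{2n} = (1/4^n)·[C(2n,n) + 1]. -/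
/-!
Write `2 cos x = e^{-ix} (1 + e^{2ix})`. For the points `x_ℓ = α + ℓπ/n` the prefactor
`e^{-2inx_ℓ} = e^{-2inα}` does not depend on `ℓ`, and `e^{2ix_ℓ} = e^{2iα} ζ^ℓ` with
`ζ = e^{2πi/n}`. Summing `(1 + w ζ^ℓ)^{2n}` over `ℓ < n` filters the binomial expansion down to
the exponents `0, n, 2n`, which gives `∑ (2 cos x_ℓ)^{2n} = n (C(2n,n) + 2 cos 2nα)`.
With `α = π/(6n)` we get `2 cos(π/3) = 1`.
-/

open Real Finset

theorem Nat.filter_dvd_range_two_mul_add_one {n : ℕ} (hn : n ≠ 0) :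
    {k ∈ range (2 * n + 1) | n ∣ k} = {0, n, 2 * n} := by
  ext k
  simp only [mem_filter, mem_range, mem_insert, mem_singleton]
  constructor
  · rintro ⟨hk, m, rfl⟩
    have hm : m < 3 := by
      by_contra! h
      nlinarith [Nat.pos_of_ne_zero hn]
    interval_cases m <;> simp [mul_comm]
  · rintro (rfl | rfl | rfl) <;> exact ⟨by omega, by simp⟩

namespace IsPrimitiveRoot

variable {R : Type*} [CommRing R] [IsDomain R] {ζ : R} {n : ℕ}

theorem sum_pow_pow_eq_ite (hζ : IsPrimitiveRoot ζ n) (k : ℕ) :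
    ∑ ℓ ∈ range n, (ζ ^ ℓ) ^ k = if n ∣ k then (n : R) else 0 := by
  simp_rw [← pow_mul, mul_comm _ k, pow_mul]
  split_ifs with hk
  · simp [(hζ.pow_eq_one_iff_dvd k).2 hk]
  · have hζk : ζ ^ k - 1 ≠ 0 := sub_ne_zero.2 fun h => hk ((hζ.pow_eq_one_iff_dvd k).1 h)
    have h := geom_sum_mul (ζ ^ k) n
    rw [pow_right_comm, hζ.pow_eq_one, one_pow, sub_self] at h
    exact (mul_eq_zero.1 h).resolve_right hζk

theorem sum_one_add_mul_pow_two_mul (hζ : IsPrimitiveRoot ζ n) (w : R) :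
    ∑ ℓ ∈ range n, (1 + w * ζ ^ ℓ) ^ (2 * n)
      = n * (1 + (2 * n).choose n * w ^ n + w ^ (2 * n)) := by
  rcases eq_or_ne n 0 with rfl | hn
  · simp
  simp_rw [add_comm (1 : R), add_pow, one_pow, mul_one]
  rw [sum_comm]
  simp_rw [mul_pow, ← sum_mul, ← mul_sum, sum_pow_pow_eq_ite hζ, mul_ite, mul_zero, ite_mul,
    zero_mul, ← sum_filter, Nat.filter_dvd_range_two_mul_add_one hn]
  have h0n : 0 ≠ n := hn.symm
  have hn2n : n ≠ 2 * n := by omega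
  have h02n : 0 ≠ 2 * n := by omega
  rw [sum_insert (by simp [h0n, h02n]), sum_insert (by simp [hn2n]), sum_singleton]
  simp only [pow_zero, one_mul, Nat.choose_zero_right, Nat.cast_one, mul_one, Nat.choose_self]
  ring

end IsPrimitiveRoot

namespace Complex

theorem two_cos_eq_exp_mul (x : ℂ) : 2 * cos x = exp (-x * I) * (1 + exp (2 * x * I)) := by
  rw [two_cos, mul_add, mul_one, ← exp_add]
  ring_nf

theorem sum_two_cos_add_mul_pi_div_pow (α : ℂ) {n : ℕ} (hn : n ≠ 0) :
    ∑ ℓ ∈ range n, (2 * cos (α + ℓ * π / n)) ^ (2 * n)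
      = n * ((2 * n).choose n + 2 * cos (2 * n * α)) := by
  have hn' : (n : ℂ) ≠ 0 := Nat.cast_ne_zero.2 hn
  set ζ := exp (2 * π * I / n)
  have hζ : IsPrimitiveRoot ζ n := isPrimitiveRoot_exp n hn
  have hshift (ℓ : ℕ) : (2 * cos (α + ℓ * π / n)) ^ (2 * n)
      = exp (-(2 * n * α) * I) * (1 + exp (2 * α * I) * ζ ^ ℓ) ^ (2 * n) := by
    have h₁ : exp (-(α + ℓ * π / n) * I) ^ (2 * n) = exp (-(2 * n * α) * I) := by
      rw [← exp_nat_mul, ← mul_one (exp (-(2 * n * α) * I)), ← exp_int_mul_two_pi_mul_I (-ℓ),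
        ← exp_add]
      congr 1
      push_cast
      field_simp
      ring
    have h₂ : exp (2 * (α + ℓ * π / n) * I) = exp (2 * α * I) * ζ ^ ℓ := by
      rw [← exp_nat_mul, ← exp_add]
      congr 1
      ring
    rw [two_cos_eq_exp_mul, mul_pow, h₁, h₂]
  simp_rw [hshift, ← mul_sum, hζ.sum_one_add_mul_pow_two_mul, ← exp_nat_mul, two_cos]
  have hn_mul : exp (n * (2 * α * I)) = exp (2 * n * α * I) := by ring_nf
  have h2n_mul : exp ((2 * n : ℕ) * (2 * α * I)) = exp (2 * n * α * I) ^ 2 := by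
    rw [← exp_nat_mul]; push_cast; ring_nf
  rw [hn_mul, h2n_mul, neg_mul, exp_neg]
  field_simp
  ring

end Complex

theorem Real.sum_cos_add_mul_pi_div_pow (α : ℝ) {n : ℕ} (hn : n ≠ 0) :
    ∑ ℓ ∈ range n, cos (α + ℓ * π / n) ^ (2 * n)
      = n * ((2 * n).choose n + 2 * cos (2 * n * α)) / 4 ^ n := by
  have h : ∑ ℓ ∈ range n, (2 * cos (α + ℓ * π / n)) ^ (2 * n)
      = n * ((2 * n).choose n + 2 * cos (2 * n * α)) := by
    exact_mod_cast Complex.sum_two_cos_add_mul_pi_div_pow α hn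
  rw [eq_div_iff (by positivity), ← h, sum_mul]
  refine sum_congr rfl fun ℓ _ => ?_
  rw [mul_pow, pow_mul (2 : ℝ), mul_comm]
  norm_num

theorem stmt_5 (n : ℕ) (hn : 0 < n) :
    (1 / (n : ℝ)) * ∑ ℓ ∈ Finset.range n,
        (Real.cos ((1 + 6 * ℓ) * Real.pi / (6 * n))) ^ (2 * n)
      = (1 / 4 ^ n) * ((Nat.choose (2 * n) n : ℝ) + 1) := by
  have hn₀ : (n : ℝ) ≠ 0 := by positivity
  have hshift (ℓ : ℕ) : (1 + 6 * ℓ) * π / (6 * n) = π / (6 * n) + ℓ * π / n := by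
    field_simp
  have hcos : cos (2 * n * (π / (6 * n))) = 1 / 2 := by
    rw [← cos_pi_div_three]
    congr 1
    field_simp
    ring
  simp_rw [hshift, sum_cos_add_mul_pi_div_pow _ hn.ne', hcos]
  field_simp
end

section
/- For every positive integer n, (1/n)·∑_{ℓ=0}^{n-1} (cos((1+4ℓ)π/(4n)))^{4n} = (1/16^n)·[C(4n,2n) − 2]. -/
/-!
Expanding `(2 cos θ)^(2m) = ∑ₖ C(2m, k) e^{2i(k - m)θ}` and averaging over the `n` angles
`θ + ℓπ/n` turns each exponential into a geometric sum of an `n`-th root of unity, so only the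
modes with `n ∣ k - m` survive. For `m = 2n` and `θ = π/(4n)` these are `k = 0, n, 2n, 3n, 4n`,
with phases `-1, -i, 1, i, -1`; the two imaginary terms cancel by `C(4n, n) = C(4n, 3n)`,
leaving `C(4n, 2n) - 2`.
-/

open Real Finset

theorem IsPrimitiveRoot.geom_sum_zpow_eq_ite {K : Type*} [Field K] {ζ : K} {n : ℕ}
    (hζ : IsPrimitiveRoot ζ n) (j : ℤ) :
    ∑ ℓ ∈ range n, (ζ ^ j) ^ ℓ = if (n : ℤ) ∣ j then (n : K) else 0 := by
  split_ifs with hj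
  · simp [(hζ.zpow_eq_one_iff_dvd j).mpr hj]
  · have hpow : (ζ ^ j) ^ n = 1 := by rw [← zpow_natCast, ← zpow_mul, mul_comm, zpow_mul,
      zpow_natCast, hζ.pow_eq_one, one_zpow]
    rw [geom_sum_eq (mt (hζ.zpow_eq_one_iff_dvd j).mp hj), hpow, sub_self, zero_div]

theorem Complex.two_mul_cos_pow_eq_sum (x : ℂ) (N : ℕ) :
    (2 * Complex.cos x) ^ N =
      ∑ k ∈ range (N + 1), (N.choose k : ℂ) * Complex.exp ((2 * k - N) * x * Complex.I) := by
  have h2cos : 2 * Complex.cos x = Complex.exp (x * Complex.I) + Complex.exp (-x * Complex.I) := by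
    rw [Complex.cos]; ring
  rw [h2cos, add_pow]
  refine sum_congr rfl fun k hk => ?_
  have hkN : k ≤ N := Nat.lt_succ_iff.mp (mem_range.mp hk)
  rw [← Complex.exp_nat_mul, ← Complex.exp_nat_mul, ← Complex.exp_add, mul_comm]
  congr 2
  push_cast [hkN]
  ring

theorem Finset.sum_range_mul_add_one_ite_dvd {M : Type*} [AddCommMonoid M] (f : ℕ → M)
    {n : ℕ} (hn : n ≠ 0) (m : ℕ) :
    ∑ k ∈ range (m * n + 1), (if n ∣ k then f k else 0) = ∑ j ∈ range (m + 1), f (j * n) := by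
  have hfilter : {k ∈ range (m * n + 1) | n ∣ k} = (range (m + 1)).image (· * n) := by
    ext k
    simp only [mem_filter, mem_range, mem_image, Nat.lt_succ_iff]
    constructor
    · rintro ⟨hk, j, rfl⟩
      exact ⟨j, by nlinarith [Nat.pos_of_ne_zero hn], mul_comm j n⟩
    · rintro ⟨j, hj, rfl⟩
      exact ⟨Nat.mul_le_mul_right n hj, dvd_mul_left n j⟩
  rw [← sum_filter, hfilter, sum_image fun a _ b _ h => Nat.eq_of_mul_eq_mul_right
    (Nat.pos_of_ne_zero hn) h]

open Complex in
theorem Complex.sum_two_mul_cos_add_pow_eq (x : ℂ) {n : ℕ} (hn : n ≠ 0) (m : ℕ) :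
    ∑ ℓ ∈ range n, (2 * cos (x + ℓ * π / n)) ^ (2 * m) =
      n * ∑ k ∈ range (2 * m + 1), if (n : ℤ) ∣ (k - m : ℤ) then
        ((2 * m).choose k : ℂ) * exp (2 * (k - m) * x * I) else 0 := by
  set ζ := exp (2 * π * I / n)
  have hζ : IsPrimitiveRoot ζ n := isPrimitiveRoot_exp n hn
  have hterm : ∀ (k ℓ : ℕ), exp ((2 * k - (2 * m : ℕ)) * (x + ℓ * π / n) * I) =
      exp (2 * (k - m) * x * I) * (ζ ^ (k - m : ℤ)) ^ ℓ := by
    intro k ℓ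
    rw [← exp_int_mul, ← exp_nat_mul, ← exp_add]
    congr 1
    field_simp
    push_cast
    ring
  simp only [two_mul_cos_pow_eq_sum, hterm]
  rw [sum_comm, mul_sum]
  refine sum_congr rfl fun k _ => ?_
  simp only [← mul_assoc, ← mul_sum, hζ.geom_sum_zpow_eq_ite]
  split_ifs <;> ring

open Complex in
theorem Complex.sum_two_mul_cos_pow_four_mul {n : ℕ} (hn : n ≠ 0) :
    ∑ ℓ ∈ range n, (2 * cos ((1 + 4 * ℓ) * π / (4 * n))) ^ (4 * n) =
      n * ((4 * n).choose (2 * n) - 2) := by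
  have hangle : ∀ ℓ : ℕ, ((1 + 4 * ℓ) * π / (4 * n) : ℂ) = π / (4 * n) + ℓ * π / n := by
    intro ℓ
    field_simp
  have hdvd : ∀ k : ℕ, (n : ℤ) ∣ (k - (2 * n : ℕ) : ℤ) ↔ n ∣ k := by
    intro k
    rw [dvd_sub_left (by push_cast; exact dvd_mul_left _ _)]
    exact Int.natCast_dvd_natCast
  have hphase : ∀ j : ℕ, exp (2 * ((j * n : ℕ) - (2 * n : ℕ)) * (π / (4 * n)) * I) = -I ^ j := by
    intro j
    have : (2 * ((j * n : ℕ) - (2 * n : ℕ)) * (π / (4 * n)) * I : ℂ) = j * (π / 2 * I) - π * I := by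
      field_simp
      push_cast
      ring
    rw [this, exp_sub, exp_nat_mul, exp_pi_div_two_mul_I, exp_pi_mul_I, div_neg, div_one]
  have hsymm : (4 * n).choose (3 * n) = (4 * n).choose (1 * n) := by
    rw [← Nat.choose_symm (by omega)]
    congr 1
    omega
  calc ∑ ℓ ∈ range n, (2 * cos ((1 + 4 * ℓ) * π / (4 * n))) ^ (4 * n)
      = ∑ ℓ ∈ range n, (2 * cos (π / (4 * n) + ℓ * π / n)) ^ (2 * (2 * n)) := by
        simp only [hangle, ← mul_assoc, show (2 * 2 : ℕ) = 4 from rfl]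
    _ = n * ∑ k ∈ range (4 * n + 1), if n ∣ k then
          ((4 * n).choose k : ℂ) * exp (2 * (k - (2 * n : ℕ)) * (π / (4 * n)) * I) else 0 := by
        rw [sum_two_mul_cos_add_pow_eq _ hn]
        simp only [hdvd, ← mul_assoc, show (2 * 2 : ℕ) = 4 from rfl]
    _ = n * ∑ j ∈ range 5, -((4 * n).choose (j * n) * I ^ j) := by
        rw [sum_range_mul_add_one_ite_dvd _ hn 4]
        simp only [hphase, mul_neg]
    _ = n * ((4 * n).choose (2 * n) - 2) := by
        simp only [sum_range_succ, sum_range_zero, hsymm, zero_mul, Nat.choose_zero_right,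
          Nat.choose_self, Nat.cast_one, pow_zero, pow_one, I_sq, I_pow_three, I_pow_four]
        ring

theorem stmt_6 (n : ℕ) (hn : 0 < n) :
    (1 / (n : ℝ)) * ∑ ℓ ∈ Finset.range n,
        (Real.cos ((1 + 4 * ℓ) * Real.pi / (4 * n))) ^ (4 * n)
      = (1 / 16 ^ n) * ((Nat.choose (4 * n) (2 * n) : ℝ) - 2) := by
  have hsum : ∑ ℓ ∈ range n, (2 * Real.cos ((1 + 4 * ℓ) * π / (4 * n))) ^ (4 * n) =
      n * ((4 * n).choose (2 * n) - 2 : ℝ) := by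
    exact_mod_cast Complex.sum_two_mul_cos_pow_four_mul hn.ne'
  have h16 : (2 : ℝ) ^ (4 * n) = 16 ^ n := by rw [pow_mul]; norm_num
  simp only [mul_pow, h16, ← mul_sum] at hsum
  rw [one_div_mul_eq_div, one_div_mul_eq_div, div_eq_div_iff (by positivity) (by positivity)]
  linear_combination hsum
end

section
/- For any real θ and natural numbers n, k with 1 ≤ 2k+1 < 2n+1, the sum (1/(2n+1)) ∑_{ℓ=0}^{2n} (cos((θ+2πℓ)/(2n+1)))^{2k+1} equals 0. -/
/-!
Write `cos x = (u + u⁻¹) / 2` with `u = exp (i x)`. At the points `x_ℓ = (θ + 2πℓ) / N` we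
have `u_ℓ = w ζ^ℓ` with `w = exp (iθ / N)` and `ζ = exp (2πi / N)` a primitive `N`-th root of
unity, so the binomial theorem turns `cos x_ℓ ^ M` into a combination of the powers
`(w ζ^ℓ) ^ (2j - M)`, `0 ≤ j ≤ M`. For `M` odd and `M < N` the exponent `2j - M` is nonzero
and of absolute value below `N`, hence not divisible by `N`, and summing `(ζ ^ (2j - M)) ^ ℓ`
over `ℓ < N` gives `0`.
-/

open Real Finset

theorem IsPrimitiveRoot.sum_range_mul_pow_zpow_eq_zero {K : Type*} [Field K] {ζ : K}
    {N : ℕ} (hζ : IsPrimitiveRoot ζ N) (w : K) {m : ℤ} (hm : ¬ (N : ℤ) ∣ m) :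
    ∑ ℓ ∈ range N, (w * ζ ^ ℓ) ^ m = 0 := by
  have hne : ζ ^ m ≠ 1 := mt (hζ.zpow_eq_one_iff_dvd m).mp hm
  have hpow : (ζ ^ m) ^ N = 1 := by
    rw [← zpow_natCast, ← zpow_mul, mul_comm, zpow_mul, zpow_natCast, hζ.pow_eq_one, one_zpow]
  have hterm (ℓ : ℕ) : (w * ζ ^ ℓ) ^ m = w ^ m * (ζ ^ m) ^ ℓ := by
    rw [mul_zpow, ← zpow_natCast ζ ℓ, ← zpow_mul, mul_comm (ℓ : ℤ), zpow_mul, zpow_natCast]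
  simp_rw [hterm, ← mul_sum, geom_sum_eq hne, hpow, sub_self, zero_div, mul_zero]

theorem add_inv_pow_eq_sum_zpow {K : Type*} [Field K] {u : K} (hu : u ≠ 0) (M : ℕ) :
    (u + u⁻¹) ^ M = ∑ j ∈ range (M + 1), (M.choose j : K) * u ^ (2 * (j : ℤ) - M) := by
  rw [add_pow]
  refine sum_congr rfl fun j hj => ?_
  have hjM : j ≤ M := Nat.lt_succ_iff.mp (mem_range.mp hj)
  rw [inv_pow, ← zpow_natCast, ← zpow_natCast, ← zpow_neg, ← zpow_add₀ hu, mul_comm]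
  congr 2
  push_cast [hjM]
  ring

theorem Complex.sum_range_cos_pow_eq_zero (θ : ℂ) {N M : ℕ} (hM : Odd M) (hMN : M < N) :
    ∑ ℓ ∈ range N, Complex.cos ((θ + 2 * π * ℓ) / N) ^ M = 0 := by
  have hN : (N : ℂ) ≠ 0 := Nat.cast_ne_zero.mpr (by omega)
  set ζ := Complex.exp (2 * π * Complex.I / N)
  set w := Complex.exp (θ * Complex.I / N)
  have hterm (ℓ : ℕ) : Complex.cos ((θ + 2 * π * ℓ) / N) ^ M =
      ∑ j ∈ range (M + 1), (M.choose j : ℂ) / 2 ^ M * (w * ζ ^ ℓ) ^ (2 * (j : ℤ) - M) := by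
    have hexp : Complex.exp ((θ + 2 * π * ℓ) / N * Complex.I) = w * ζ ^ ℓ := by
      rw [← Complex.exp_nat_mul, ← Complex.exp_add]
      congr 1
      field_simp
    have hu : w * ζ ^ ℓ ≠ 0 :=
      mul_ne_zero (Complex.exp_ne_zero _) (pow_ne_zero _ (Complex.exp_ne_zero _))
    rw [Complex.cos, neg_mul, Complex.exp_neg, hexp, div_pow, add_inv_pow_eq_sum_zpow hu, sum_div]
    exact sum_congr rfl fun j _ => by ring
  have hnot_dvd (j : ℕ) (hj : j ∈ range (M + 1)) : ¬ (N : ℤ) ∣ 2 * (j : ℤ) - M := by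
    obtain ⟨t, rfl⟩ := hM
    have := mem_range.mp hj
    intro hdvd
    have := Int.eq_zero_of_abs_lt_dvd hdvd (abs_lt.mpr ⟨by omega, by omega⟩)
    omega
  rw [sum_congr rfl fun ℓ _ => hterm ℓ, sum_comm]
  refine sum_eq_zero fun j hj => ?_
  rw [← mul_sum, (Complex.isPrimitiveRoot_exp N (by omega)).sum_range_mul_pow_zpow_eq_zero w
    (hnot_dvd j hj), mul_zero]

theorem Real.sum_range_cos_pow_eq_zero (θ : ℝ) {N M : ℕ} (hM : Odd M) (hMN : M < N) :
    ∑ ℓ ∈ range N, Real.cos ((θ + 2 * π * ℓ) / N) ^ M = 0 := by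
  have h := Complex.sum_range_cos_pow_eq_zero θ hM hMN
  exact_mod_cast h

theorem stmt_7 (θ : ℝ) (n k : ℕ) (hk : k < n) :
    (1 / (2 * n + 1 : ℝ)) * ∑ ℓ ∈ Finset.range (2 * n + 1),
        (Real.cos ((θ + 2 * Real.pi * ℓ) / (2 * n + 1))) ^ (2 * k + 1) = 0 := by
  have h := Real.sum_range_cos_pow_eq_zero θ (odd_two_mul_add_one k)
    (by omega : 2 * k + 1 < 2 * n + 1)
  push_cast at h
  rw [h, mul_zero]
end

section
/- For any real θ and natural numbers n, k with 2n+1 ≤ 2k+1 < 3(2n+1), the sum (1/(2n+1)) ∑_{ℓ=0}^{2n} (cos((θ+2πℓ)/(2n+1)))^{2k+1} equals (1/4^k)·C(2k+1, k−n)·cos θ. -/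
/-!
Expand `cos x ^ (2k+1) = 2^{-(2k+1)} ∑ⱼ C(2k+1, j) e^{i(2j-2k-1)x}`. Averaging `e^{imx}` over the
`2n+1` points `x = (θ + 2πℓ)/(2n+1)` is a sum over roots of unity: it vanishes unless `2n+1 ∣ m`,
and then equals `e^{imθ/(2n+1)}`. Since `|2j-2k-1| ≤ 2k+1 < 3(2n+1)` and `2j-2k-1` is odd, only
`m = ±(2n+1)` survive, i.e. `j = k-n` and `j = k+n+1`, whose binomial coefficients agree; their
two terms `e^{∓iθ}` add up to `2 cos θ`.
-/

open Real Finset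

lemma geom_sum_eq_ite_of_pow_eq_one {K : Type*} [DivisionRing K] [DecidableEq K] {ζ : K} {N : ℕ}
    (hζ : ζ ^ N = 1) : ∑ i ∈ range N, ζ ^ i = if ζ = 1 then (N : K) else 0 := by
  split_ifs with h
  · simp [h]
  · rw [geom_sum_eq h, hζ, sub_self, zero_div]

open Complex in
lemma sum_range_exp_int_mul_shift {N : ℕ} (hN : N ≠ 0) (m : ℤ) (θ : ℂ) :
    ∑ ℓ ∈ range N, exp (m * ((θ + 2 * π * ℓ) / N) * I) =
      if (N : ℤ) ∣ m then N * exp (m * θ / N * I) else 0 := by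
  have hω : IsPrimitiveRoot (exp (2 * π * I / N)) N := isPrimitiveRoot_exp N hN
  have hterm (ℓ : ℕ) : exp (m * ((θ + 2 * π * ℓ) / N) * I) =
      exp (m * θ / N * I) * (exp (2 * π * I / N) ^ m) ^ ℓ := by
    rw [← zpow_natCast, ← zpow_mul, ← exp_int_mul, ← Complex.exp_add]
    push_cast
    ring_nf
  have hpow : (exp (2 * π * I / N) ^ m) ^ N = 1 := by
    rw [← zpow_natCast, ← zpow_mul, mul_comm m, zpow_mul, zpow_natCast, hω.pow_eq_one, one_zpow]
  classical
  simp only [hterm, ← mul_sum, geom_sum_eq_ite_of_pow_eq_one hpow, hω.zpow_eq_one_iff_dvd]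
  split_ifs <;> ring

open Complex in
lemma cos_pow_eq_sum_exp (M : ℕ) (x : ℂ) :
    Complex.cos x ^ M =
      (∑ j ∈ range (M + 1), M.choose j * exp ((2 * j - M : ℤ) * x * I)) / 2 ^ M := by
  rw [Complex.cos, div_pow, add_pow]
  congr 1
  refine sum_congr rfl fun j hj => ?_
  rw [← Complex.exp_nat_mul, ← Complex.exp_nat_mul, ← Complex.exp_add, mul_comm]
  push_cast [Nat.cast_sub (Nat.lt_succ_iff.mp (mem_range.mp hj))]
  ring_nf

open Complex in
lemma sum_range_cos_pow_shift (M : ℕ) {N : ℕ} (hN : N ≠ 0) (θ : ℂ) :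
    ∑ ℓ ∈ range N, Complex.cos ((θ + 2 * π * ℓ) / N) ^ M =
      N / 2 ^ M * ∑ j ∈ (range (M + 1)).filter (fun j : ℕ ↦ (N : ℤ) ∣ 2 * j - M),
        M.choose j * exp ((2 * j - M : ℤ) * θ / N * I) := by
  simp only [cos_pow_eq_sum_exp, ← sum_div, mul_sum]
  rw [sum_comm]
  simp only [← mul_sum, sum_range_exp_int_mul_shift hN, mul_ite, mul_zero, sum_ite, sum_const_zero]
  rw [add_zero, div_eq_mul_inv, sum_mul, mul_sum]
  exact sum_congr rfl fun j _ ↦ by ring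

lemma filter_dvd_two_mul_sub_eq_pair {n k : ℕ} (h1 : n ≤ k) (h2 : 2 * k + 1 < 3 * (2 * n + 1)) :
    (range (2 * k + 1 + 1)).filter (fun j : ℕ ↦ ((2 * n + 1 : ℕ) : ℤ) ∣ 2 * j - (2 * k + 1 : ℕ)) =
      {k - n, k + n + 1} := by
  ext j
  simp only [mem_filter, mem_range, mem_insert, mem_singleton]
  constructor
  · rintro ⟨hj, t, ht⟩
    -- `2j - (2k+1)` is odd and lies strictly between `-3(2n+1)` and `3(2n+1)`, so `t = ±1`.
    push_cast at ht
    have ht_lt : t < 3 := by nlinarith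
    have ht_gt : -3 < t := by nlinarith
    interval_cases t <;> omega
  · rintro (rfl | rfl)
    · exact ⟨by omega, -1, by push_cast [Nat.cast_sub h1]; ring⟩
    · exact ⟨by omega, 1, by push_cast; ring⟩

theorem stmt_8 (θ : ℝ) (n k : ℕ) (h1 : n ≤ k) (h2 : 2 * k + 1 < 3 * (2 * n + 1)) :
    (1 / (2 * n + 1 : ℝ)) * ∑ ℓ ∈ Finset.range (2 * n + 1),
        (Real.cos ((θ + 2 * Real.pi * ℓ) / (2 * n + 1))) ^ (2 * k + 1)
      = (1 / 4 ^ k) * (Nat.choose (2 * k + 1) (k - n) : ℝ) * Real.cos θ := by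
  have key := sum_range_cos_pow_shift (2 * k + 1) (N := 2 * n + 1) (by omega) θ
  rw [filter_dvd_two_mul_sub_eq_pair h1 h2, sum_pair (by omega),
    ← Nat.choose_symm_of_eq_add (by omega : 2 * k + 1 = (k - n) + (k + n + 1))] at key
  apply Complex.ofReal_injective
  push_cast [Complex.ofReal_cos] at key ⊢
  have hN : (2 * n + 1 : ℂ) ≠ 0 := by exact_mod_cast (by omega : 2 * n + 1 ≠ 0)
  have hlow : (2 * ((k - n : ℕ) : ℂ) - (2 * k + 1)) * θ / (2 * n + 1) * Complex.I =
      -(θ * Complex.I) := by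
    push_cast [Nat.cast_sub h1]
    field_simp
    ring
  have hhigh : (2 * (k + n + 1 : ℂ) - (2 * k + 1)) * θ / (2 * n + 1) * Complex.I =
      θ * Complex.I := by
    field_simp
    ring
  rw [key, hlow, hhigh, Complex.cos, pow_succ, pow_mul]
  field_simp
  ring
end

section
/- For any real θ, positive integers m, q, k with 2q < 2m, the sum (1/(2m)) ∑_{ℓ=0}^{2m-1} (sin((θ+πℓ)/m))^{2k+1} · sin(2q(θ+πℓ)/m) equals 0 for all k. -/
open Real Finset

theorem stmt_13 (θ : ℝ) (m q k : ℕ) (hm : 0 < m) (hq : 0 < q) (hqm : q < m) :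
    (1 / (2 * m : ℝ)) * ∑ ℓ ∈ Finset.range (2 * m),
        (Real.sin ((θ + Real.pi * ℓ) / m)) ^ (2 * k + 1)
          * Real.sin (2 * q * (θ + Real.pi * ℓ) / m) = 0 := by
  have hm0 : (m : ℝ) ≠ 0 := Nat.cast_ne_zero.mpr hm.ne'
  have hsum : ∑ ℓ ∈ Finset.range (2 * m),
      (Real.sin ((θ + Real.pi * ℓ) / m)) ^ (2 * k + 1)
        * Real.sin (2 * q * (θ + Real.pi * ℓ) / m) = 0 := by
    have h2m : 2 * m = m + m := by ring
    rw [h2m, Finset.sum_range_add]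
    have hcancel : ∀ ℓ ∈ Finset.range m,
        (Real.sin ((θ + Real.pi * (↑(m + ℓ))) / m)) ^ (2 * k + 1)
          * Real.sin (2 * q * (θ + Real.pi * (↑(m + ℓ))) / m)
        = -((Real.sin ((θ + Real.pi * ℓ) / m)) ^ (2 * k + 1)
          * Real.sin (2 * q * (θ + Real.pi * ℓ) / m)) := by
      intro ℓ _
      have e1 : (θ + Real.pi * (↑(m + ℓ))) / m = (θ + Real.pi * ℓ) / m + Real.pi := by
        push_cast
        field_simp
        ring
      have e2 : 2 * (q:ℝ) * (θ + Real.pi * (↑(m + ℓ))) / m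
          = 2 * q * (θ + Real.pi * ℓ) / m + q * (2 * Real.pi) := by
        push_cast
        field_simp
        ring
      rw [e1, e2, Real.sin_add_pi, Real.sin_add_nat_mul_two_pi,
        Odd.neg_pow ⟨k, by ring⟩]
      ring
    rw [Finset.sum_congr rfl hcancel, Finset.sum_neg_distrib]
    ring
  rw [hsum, mul_zero]
end

section
/- For any real θ and natural numbers m, q, k with q ≤ k < m−q−1, the sum (1/m) ∑_{ℓ=0}^{m-1} (sin((θ+πℓ)/m))^{2k+1} · sin((2q+1)(θ+πℓ)/m) equals ((−1)^q/2^{2k+1})·C(2k+1, k−q). -/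
/-!
With `z = exp (x * I)` we have `sin x = (z - z⁻¹) / (2 * I)`, so the summand is a Laurent
polynomial in `w = z ^ 2` whose exponents lie in `(-m, m)`. The points
`w_ℓ = exp (2 * (θ + π * ℓ) / m * I)` are `exp (2 * θ / m * I)` times the `m`-th roots of
unity, so averaging over `ℓ` kills every power `w ^ s` with `s ≠ 0`. Only the constant terms
survive, coming from the binomial indices `k + q + 1` and `k - q`, which carry the same coefficient.
-/

open Finset
open Complex (I exp sin)
open scoped Real

lemma sub_inv_pow_mul_pow_sub_inv {K : Type*} [Field K] {z : K} (hz : z ≠ 0) (k q : ℕ) :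
    (z - z⁻¹) ^ (2 * k + 1) * (z ^ (2 * q + 1) - (z ^ (2 * q + 1))⁻¹)
      = ∑ i ∈ range (2 * k + 2), (-1) ^ i * ((2 * k + 1).choose i : K) *
          ((z ^ 2) ^ ((k + q + 1 : ℤ) - i) - (z ^ 2) ^ ((k : ℤ) - q - i)) := by
  rw [sub_eq_neg_add, add_pow, sum_mul]
  refine sum_congr rfl fun i hi ↦ ?_
  have hi : i ≤ 2 * k + 1 := Nat.lt_succ_iff.1 (mem_range.1 hi)
  have hmon : z⁻¹ ^ i * z ^ (2 * k + 1 - i) = z ^ ((2 * k + 1 : ℤ) - 2 * i) := by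
    rw [← zpow_natCast, ← zpow_natCast, inv_zpow', ← zpow_add₀ hz]
    push_cast [hi]
    ring_nf
  have hplus : z ^ ((2 * k + 1 : ℤ) - 2 * i) * z ^ (2 * q + 1)
      = (z ^ 2) ^ ((k + q + 1 : ℤ) - i) := by
    rw [← zpow_natCast, ← zpow_add₀ hz, ← zpow_natCast, ← zpow_mul]
    push_cast
    ring_nf
  have hminus : z ^ ((2 * k + 1 : ℤ) - 2 * i) * (z ^ (2 * q + 1))⁻¹
      = (z ^ 2) ^ ((k : ℤ) - q - i) := by
    rw [← zpow_natCast, ← zpow_neg, ← zpow_add₀ hz, ← zpow_natCast, ← zpow_mul]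
    push_cast
    ring_nf
  rw [neg_pow, ← hplus, ← hminus, ← hmon]
  ring

lemma sum_range_pow_eq_zero_of_pow_eq_one {K : Type*} [Field K] {x : K} {m : ℕ}
    (hx : x ≠ 1) (hxm : x ^ m = 1) : ∑ ℓ ∈ range m, x ^ ℓ = 0 := by
  rw [geom_sum_eq hx, hxm, sub_self, zero_div]

lemma sum_range_exp_zpow (θ : ℂ) {m : ℕ} (hm : m ≠ 0) {s : ℤ} (hs : s.natAbs < m) :
    ∑ ℓ ∈ range m, exp (2 * ((θ + π * ℓ) / m) * I) ^ s
      = if s = 0 then (m : ℂ) else 0 := by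
  split_ifs with h0
  · simp [h0]
  set ζ := exp (2 * π * I / m)
  have hζ : IsPrimitiveRoot ζ m := Complex.isPrimitiveRoot_exp m hm
  have hterm : ∀ ℓ : ℕ, exp (2 * ((θ + π * ℓ) / m) * I) ^ s
      = exp (2 * θ / m * I) ^ s * (ζ ^ s) ^ ℓ := by
    intro ℓ
    rw [← zpow_natCast, ← zpow_mul, mul_comm s, zpow_mul, zpow_natCast, ← mul_zpow,
      ← Complex.exp_nat_mul, ← Complex.exp_add]
    congr 2
    ring
  have hζs : ζ ^ s ≠ 1 := fun h ↦
    h0 (Int.eq_zero_of_abs_lt_dvd ((hζ.zpow_eq_one_iff_dvd s).1 h)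
      (by rw [Int.abs_eq_natAbs]; exact_mod_cast hs))
  have hζsm : (ζ ^ s) ^ m = 1 := by
    rw [← zpow_natCast, ← zpow_mul, mul_comm, zpow_mul, zpow_natCast, hζ.pow_eq_one, one_zpow]
  simp_rw [hterm, ← mul_sum, sum_range_pow_eq_zero_of_pow_eq_one hζs hζsm, mul_zero]

lemma sin_eq_exp_sub_inv (x : ℂ) : sin x = (exp (x * I) - (exp (x * I))⁻¹) / (2 * I) := by
  rw [Complex.sin, ← Complex.exp_neg, neg_mul]
  field_simp
  ring_nf
  simp [Complex.I_sq]

lemma sin_pow_mul_sin (x : ℂ) (k q : ℕ) :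
    sin x ^ (2 * k + 1) * sin ((2 * q + 1) * x)
      = (∑ i ∈ range (2 * k + 2), (-1) ^ i * ((2 * k + 1).choose i : ℂ) *
          (exp (2 * x * I) ^ ((k + q + 1 : ℤ) - i) - exp (2 * x * I) ^ ((k : ℤ) - q - i)))
        / (-4) ^ (k + 1) := by
  have hsq : exp (2 * x * I) = exp (x * I) ^ 2 := by rw [← Complex.exp_nat_mul]; ring_nf
  have hpow : exp ((2 * q + 1) * x * I) = exp (x * I) ^ (2 * q + 1) := by
    rw [← Complex.exp_nat_mul]; push_cast; ring_nf
  have hI : (2 * I) ^ (2 * k + 2) = (-4) ^ (k + 1) := by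
    rw [show 2 * k + 2 = 2 * (k + 1) by ring, pow_mul, mul_pow, Complex.I_sq]
    norm_num
  rw [sin_eq_exp_sub_inv, sin_eq_exp_sub_inv, hpow, hsq,
    ← sub_inv_pow_mul_pow_sub_inv (Complex.exp_ne_zero _), div_pow, div_mul_div_comm,
    ← pow_succ, hI]

theorem sum_range_sin_pow_mul_sin (θ : ℂ) {m q k : ℕ} (hqk : q ≤ k) (hkm : k + q + 1 < m) :
    ∑ ℓ ∈ range m, sin ((θ + π * ℓ) / m) ^ (2 * k + 1)
        * sin ((2 * q + 1) * (θ + π * ℓ) / m)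
      = m * ((-1) ^ q / 2 ^ (2 * k + 1) * (2 * k + 1).choose (k - q)) := by
  have hmoment : ∀ i ∈ range (2 * k + 2), ∑ ℓ ∈ range m,
      (exp (2 * ((θ + π * ℓ) / m) * I) ^ ((k + q + 1 : ℤ) - i)
        - exp (2 * ((θ + π * ℓ) / m) * I) ^ ((k : ℤ) - q - i))
      = (if k + q + 1 = i then (m : ℂ) else 0) - (if k - q = i then (m : ℂ) else 0) := by
    intro i hi
    have hi := mem_range.1 hi
    rw [sum_sub_distrib, sum_range_exp_zpow θ (by omega) (by omega),
      sum_range_exp_zpow θ (by omega) (by omega)]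
    congr 2 <;> simp only [eq_iff_iff] <;> omega
  simp_rw [mul_div_assoc, sin_pow_mul_sin, ← sum_div]
  rw [sum_comm]
  simp_rw [← mul_sum]
  rw [sum_congr rfl fun i hi ↦ congrArg _ (hmoment i hi)]
  simp only [mul_sub, mul_ite, mul_zero, sum_sub_distrib, sum_ite_eq, mem_range]
  rw [if_pos (by omega), if_pos (by omega),
    Nat.choose_symm_of_eq_add (by omega : 2 * k + 1 = k + q + 1 + (k - q))]
  obtain ⟨d, rfl⟩ := Nat.exists_eq_add_of_le hqk
  rw [Nat.add_sub_cancel_left, show (-4 : ℂ) = (-1) * 2 ^ 2 by norm_num, mul_pow, ← pow_mul]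
  have h2q : (-1 : ℂ) ^ (2 * q) = 1 := (even_two_mul q).neg_one_pow
  field_simp
  linear_combination ((2 * (q + d) + 1).choose d * m * 2 ^ (2 * (q + d) + 1) * (-1) ^ d : ℂ) * h2q

theorem stmt_16_general (θ : ℝ) (m q k : ℕ) (h1 : q ≤ k) (h2 : k < m - q - 1) :
    (1 / (m : ℝ)) * ∑ ℓ ∈ Finset.range m,
        (Real.sin ((θ + Real.pi * ℓ) / m)) ^ (2 * k + 1)
          * Real.sin ((2 * q + 1) * (θ + Real.pi * ℓ) / m)
      = ((-1) ^ q / 2 ^ (2 * k + 1)) * (Nat.choose (2 * k + 1) (k - q) : ℝ) := by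
  have hm : (m : ℂ) ≠ 0 := Nat.cast_ne_zero.2 (by omega)
  apply Complex.ofReal_injective
  push_cast
  rw [sum_range_sin_pow_mul_sin θ h1 (by omega)]
  field_simp

theorem stmt_16 (θ : ℝ) (m q k : ℕ) (hqm : 2 * q + 1 < m) (h1 : q ≤ k) (h2 : k < m - q - 1) :
    (1 / (m : ℝ)) * ∑ ℓ ∈ Finset.range m,
        (Real.sin ((θ + Real.pi * ℓ) / m)) ^ (2 * k + 1)
          * Real.sin ((2 * q + 1) * (θ + Real.pi * ℓ) / m)
      = ((-1) ^ q / 2 ^ (2 * k + 1)) * (Nat.choose (2 * k + 1) (k - q) : ℝ) :=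
  stmt_16_general θ m q k h1 h2
end

section
/- For any real θ and natural numbers m, q, k with q ≤ k < 2m+1−q, the sum (1/(2m+1)) ∑_{ℓ=0}^{2m} (sin((θ+2πℓ)/(2m+1)))^{2k} · cos(2q(θ+2πℓ)/(2m+1)) equals ((−1)^q/4^k)·C(2k, k−q), and for k < q the sum equals 0. -/
/-!
Expanding `sin x = (e^{ix} - e^{-ix}) / 2i` binomially writes `sin^{2k} x · e^{2iqx}` as a
combination of the exponentials `e^{2i(j + q - k)x}`, `0 ≤ j ≤ 2k`, and the real sum is the real
part of the corresponding complex one. Averaging `e^{inx}` over the `N` points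
`(θ + 2πℓ)/N` gives a geometric sum in the `N`-th root of unity `e^{2πin/N}`, which vanishes
unless `N ∣ n`. Here `n = 2(j + q - k)` with `|j + q - k| ≤ k + q < N` and `N` odd, so only the
term `j = k - q` survives, and it exists only when `q ≤ k`.
-/

open Real Finset

open scoped Complex
open Complex (I)

theorem sum_range_exp_int_mul_eq_zero (θ : ℝ) (N : ℕ) {n : ℤ} (hn : ¬(N : ℤ) ∣ n) :
    ∑ ℓ ∈ range N, cexp (n * ((θ + 2 * π * ℓ) / N : ℝ) * I) = 0 := by
  rcases eq_or_ne N 0 with rfl | hN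
  · simp
  set ζ := cexp (2 * π * I / N)
  have hζ : IsPrimitiveRoot ζ N := Complex.isPrimitiveRoot_exp N hN
  have hterm (ℓ : ℕ) :
      cexp (n * ((θ + 2 * π * ℓ) / N : ℝ) * I) = cexp (n * θ * I / N) * (ζ ^ n) ^ ℓ := by
    rw [← zpow_natCast, ← zpow_mul, ← Complex.exp_int_mul, ← Complex.exp_add]
    congr 1
    push_cast
    field_simp
  have hρ : ζ ^ n ≠ 1 := by rwa [Ne, hζ.zpow_eq_one_iff_dvd]
  have hρN : (ζ ^ n) ^ N = 1 := by
    rw [← zpow_natCast, ← zpow_mul, mul_comm, zpow_mul, zpow_natCast, hζ.pow_eq_one, one_zpow]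
  simp_rw [hterm, ← mul_sum, geom_sum_eq hρ, hρN, sub_self, zero_div, mul_zero]

theorem Complex.sin_pow_eq_sum_exp (x : ℂ) (n : ℕ) :
    Complex.sin x ^ n = (2 * I)⁻¹ ^ n *
      ∑ j ∈ range (n + 1), (-1) ^ (n - j) * n.choose j * cexp ((2 * j - n : ℤ) * x * I) := by
  have hsin : Complex.sin x = (2 * I)⁻¹ * (cexp (x * I) + -cexp (-x * I)) := by
    rw [Complex.sin]
    field_simp
    ring_nf
    simp [Complex.I_sq]
  rw [hsin, mul_pow, add_pow]
  congr 1
  refine sum_congr rfl fun j hj => ?_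
  have hj : j ≤ n := Nat.lt_succ_iff.mp (mem_range.mp hj)
  rw [neg_pow, ← Complex.exp_nat_mul, ← Complex.exp_nat_mul]
  have : cexp (j * (x * I)) * cexp ((n - j : ℕ) * (-x * I)) = cexp ((2 * j - n : ℤ) * x * I) := by
    rw [← Complex.exp_add]
    push_cast [hj]
    ring_nf
  rw [← this]
  ring

theorem Int.eq_zero_of_dvd_two_mul_of_odd {N : ℕ} (hN : Odd N) {t : ℤ} (ht : t.natAbs < N)
    (hdvd : (N : ℤ) ∣ 2 * t) : t = 0 := by
  have hcop : IsCoprime (N : ℤ) 2 := by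
    obtain ⟨r, rfl⟩ := hN
    exact ⟨1, -r, by push_cast; ring⟩
  exact Int.eq_zero_of_dvd_of_natAbs_lt_natAbs (hcop.dvd_of_dvd_mul_left hdvd) (by simpa using ht)

theorem sum_range_sin_pow_mul_exp (θ : ℝ) {N k q : ℕ} (hN : Odd N) (hkq : k + q < N) :
    ∑ ℓ ∈ range N, Complex.sin ((θ + 2 * π * ℓ) / N : ℝ) ^ (2 * k)
        * cexp (2 * q * ((θ + 2 * π * ℓ) / N : ℝ) * I)
      = if q ≤ k then (N : ℂ) * ((-1) ^ q / 4 ^ k * (2 * k).choose (k - q)) else 0 := by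
  set x : ℕ → ℝ := fun ℓ => (θ + 2 * π * ℓ) / N
  have hinner (j : ℕ) (hj : j ∈ range (2 * k + 1)) :
      ∑ ℓ ∈ range N, cexp ((2 * (j + q - k) : ℤ) * x ℓ * I) = if j + q = k then (N : ℂ) else 0 := by
    split_ifs with hjqk
    · simp [show (j : ℤ) + q - k = 0 by omega]
    · refine sum_range_exp_int_mul_eq_zero θ N fun hdvd => hjqk ?_
      have := Int.eq_zero_of_dvd_two_mul_of_odd hN (by rw [mem_range] at hj; omega) hdvd
      omega
  calc ∑ ℓ ∈ range N, Complex.sin (x ℓ) ^ (2 * k) * cexp (2 * q * x ℓ * I)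
      = ∑ ℓ ∈ range N, (2 * I)⁻¹ ^ (2 * k) * ∑ j ∈ range (2 * k + 1),
          (-1 : ℂ) ^ (2 * k - j) * (2 * k).choose j * cexp ((2 * (j + q - k) : ℤ) * x ℓ * I) := by
        refine sum_congr rfl fun ℓ _ => ?_
        rw [Complex.sin_pow_eq_sum_exp, mul_assoc, sum_mul]
        refine congrArg _ (sum_congr rfl fun j _ => ?_)
        rw [mul_assoc, ← Complex.exp_add]
        push_cast
        ring_nf
    _ = (2 * I)⁻¹ ^ (2 * k) * ∑ j ∈ range (2 * k + 1), (-1) ^ (2 * k - j) * (2 * k).choose j *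
          ∑ ℓ ∈ range N, cexp ((2 * (j + q - k) : ℤ) * x ℓ * I) := by
        rw [← mul_sum, sum_comm]
        simp_rw [mul_sum]
    _ = (2 * I)⁻¹ ^ (2 * k) * ∑ j ∈ range (2 * k + 1), (-1) ^ (2 * k - j) * (2 * k).choose j *
          if j + q = k then (N : ℂ) else 0 := by
        rw [sum_congr rfl fun j hj => by rw [hinner j hj]]
    _ = _ := by
      split_ifs with hqk
      · rw [sum_eq_single_of_mem (k - q) (by rw [mem_range]; omega) fun j _ hj => by
          rw [if_neg (by omega), mul_zero], if_pos (by omega),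
          show 2 * k - (k - q) = k + q by omega]
        have hI : (2 * I)⁻¹ ^ 2 * (-1) = (4 : ℂ)⁻¹ := by
          rw [inv_pow, mul_pow, Complex.I_sq]
          norm_num
        rw [pow_mul, pow_add, div_eq_inv_mul, ← inv_pow, ← hI, mul_pow]
        ring
      · rw [sum_eq_zero fun j _ => by rw [if_neg (by omega), mul_zero], mul_zero]

theorem average_sin_pow_mul_cos (θ : ℝ) {N k q : ℕ} (hN : Odd N) (hkq : k + q < N) :
    (1 / N : ℝ) * ∑ ℓ ∈ range N,
        Real.sin ((θ + 2 * π * ℓ) / N) ^ (2 * k) * Real.cos (2 * q * (θ + 2 * π * ℓ) / N)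
      = if q ≤ k then (-1) ^ q / 4 ^ k * ((2 * k).choose (k - q) : ℝ) else 0 := by
  have hre (y : ℝ) :
      Real.sin y ^ (2 * k) * Real.cos (2 * q * y)
        = (Complex.sin y ^ (2 * k) * cexp (2 * q * y * I)).re := by
    rw [← Complex.ofReal_sin, ← Complex.ofReal_pow, Complex.re_ofReal_mul]
    exact_mod_cast (congrArg _ (Complex.exp_ofReal_mul_I_re (2 * q * y))).symm
  have hval : (if q ≤ k then (N : ℂ) * ((-1) ^ q / 4 ^ k * (2 * k).choose (k - q)) else 0)
      = ((N * if q ≤ k then (-1) ^ q / 4 ^ k * ((2 * k).choose (k - q) : ℝ) else 0 : ℝ) : ℂ) := by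
    split_ifs <;> push_cast <;> ring
  have hsum := congrArg Complex.re (sum_range_sin_pow_mul_exp θ hN hkq)
  simp_rw [Complex.re_sum, ← hre, ← mul_div_assoc, hval, Complex.ofReal_re] at hsum
  have hN0 : (N : ℝ) ≠ 0 := by exact_mod_cast hN.pos.ne'
  rw [hsum]
  field_simp

theorem stmt_18 (θ : ℝ) (m q k : ℕ) (hq : 2 * q < 2 * m + 1) :
    (q ≤ k → k < 2 * m + 1 - q →
      (1 / (2 * m + 1 : ℝ)) * ∑ ℓ ∈ Finset.range (2 * m + 1),
          (Real.sin ((θ + 2 * Real.pi * ℓ) / (2 * m + 1))) ^ (2 * k)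
            * Real.cos (2 * q * (θ + 2 * Real.pi * ℓ) / (2 * m + 1))
        = ((-1) ^ q / 4 ^ k) * (Nat.choose (2 * k) (k - q) : ℝ)) ∧
    (k < q →
      (1 / (2 * m + 1 : ℝ)) * ∑ ℓ ∈ Finset.range (2 * m + 1),
          (Real.sin ((θ + 2 * Real.pi * ℓ) / (2 * m + 1))) ^ (2 * k)
            * Real.cos (2 * q * (θ + 2 * Real.pi * ℓ) / (2 * m + 1)) = 0) := by
  have hN : Odd (2 * m + 1) := odd_two_mul_add_one m
  have havg (hkq : k + q < 2 * m + 1) := average_sin_pow_mul_cos θ hN hkq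
  push_cast at havg
  refine ⟨fun hqk hk => ?_, fun hkq => ?_⟩
  · rw [havg (by omega), if_pos hqk]
  · rw [havg (by omega), if_neg (by omega)]
end

section
/- For any real θ and natural numbers m, q, k with q ≤ k < 2m−q, the sum (1/(2m+1)) ∑_{ℓ=0}^{2m} (sin((θ+2πℓ)/(2m+1)))^{2k+1} · sin((2q+1)(θ+2πℓ)/(2m+1)) equals ((−1)^q/2^{2k+1})·C(2k+1, k−q), and for k < q the sum equals 0. -/
open Real Finset

/-!
With `w = exp (x * I)`, the product `sin x ^ (2k+1) * sin ((2q+1) x)` equals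
`(I/2)^(2k+2) (w⁻¹ - w)^(2k+1) (w^(-(2q+1)) - w^(2q+1))`, a Laurent polynomial in `w` whose
exponents are `2d` with `|d| ≤ k + q + 1 ≤ 2m`. Summed over the shifted roots of unity
`w_ℓ = exp ((θ + 2πℓ) / (2m+1) * I)`, the power `w_ℓ ^ n` averages to zero unless `2m+1 ∣ n`;
as `2m+1` is odd, `2m+1 ∣ 2d` forces `d = 0`. Hence the average is the constant coefficient, which
comes from the binomial terms `j = k + q + 1` and `j = k - q` and vanishes when `k < q`.
-/

open Complex in
lemma sum_exp_zpow_eq_zero_of_not_dvd {N : ℕ} {n : ℤ} (hn : ¬ (N : ℤ) ∣ n) (θ : ℝ) :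
    ∑ ℓ ∈ range N, exp (((θ + 2 * π * ℓ) / N : ℝ) * I) ^ n = 0 := by
  rcases Nat.eq_zero_or_pos N with rfl | hN
  · simp
  set ζ := exp (2 * π * I / N)
  have hζ : IsPrimitiveRoot ζ N := isPrimitiveRoot_exp N hN.ne'
  have hroot (ℓ : ℕ) : exp (((θ + 2 * π * ℓ) / N : ℝ) * I) ^ n
      = exp (θ / N * I) ^ n * (ζ ^ n) ^ ℓ := by
    rw [← zpow_natCast (ζ ^ n), ← zpow_mul, mul_comm n, zpow_mul, zpow_natCast, ← mul_zpow,
      ← Complex.exp_nat_mul, ← Complex.exp_add]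
    push_cast
    ring_nf
  have hne : ζ ^ n ≠ 1 := mt (hζ.zpow_eq_one_iff_dvd n).1 hn
  have hpow : (ζ ^ n) ^ N = 1 := by
    rw [← zpow_natCast, ← zpow_mul, mul_comm, zpow_mul, zpow_natCast, hζ.pow_eq_one, one_zpow]
  simp_rw [hroot, ← mul_sum, geom_sum_eq hne, hpow, sub_self, zero_div, mul_zero]

lemma sum_exp_zpow_two_mul {m : ℕ} {d : ℤ} (hd : d.natAbs ≤ 2 * m) (θ : ℝ) :
    ∑ ℓ ∈ range (2 * m + 1),
        Complex.exp (((θ + 2 * π * ℓ) / (2 * m + 1) : ℝ) * Complex.I) ^ (2 * d)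
      = if d = 0 then (2 * m + 1 : ℂ) else 0 := by
  split_ifs with hd0
  · simp [hd0]
  · have hodd : IsCoprime ((2 * m + 1 : ℕ) : ℤ) 2 := by
      rw [Int.isCoprime_iff_gcd_eq_one]; simp [Int.gcd]
    have hndvd : ¬ ((2 * m + 1 : ℕ) : ℤ) ∣ 2 * d := fun hdvd => hd0 <| Int.natAbs_eq_zero.1 <|
      Nat.eq_zero_of_dvd_of_lt (Int.natAbs_dvd_natAbs.2 (hodd.dvd_of_dvd_mul_left hdvd)) (by simp; omega)
    simpa using sum_exp_zpow_eq_zero_of_not_dvd hndvd θ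

lemma Complex.sin_int_mul (z : ℂ) (n : ℤ) :
    Complex.sin (n * z) = (Complex.exp (z * I) ^ (-n) - Complex.exp (z * I) ^ n) * I / 2 := by
  rw [Complex.sin, ← Complex.exp_int_mul, ← Complex.exp_int_mul]
  push_cast
  ring_nf

lemma inv_sub_pow_mul_zpow_sub_zpow_eq_sum {K : Type*} [Field K] {w : K} (hw : w ≠ 0) (k q : ℕ) :
    (w⁻¹ - w) ^ (2 * k + 1) * (w ^ (-(2 * q + 1 : ℤ)) - w ^ (2 * q + 1 : ℤ))
      = ∑ j ∈ range (2 * k + 2), ((2 * k + 1).choose j : K) * (-1) ^ j *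
          (w ^ (2 * ((j : ℤ) - k - q - 1)) - w ^ (2 * ((j : ℤ) - k + q))) := by
  rw [sub_eq_neg_add, add_pow, sum_mul]
  refine sum_congr rfl fun j hj => ?_
  have hj : j ≤ 2 * k + 1 := Nat.lt_succ_iff.1 (mem_range.1 hj)
  have hmon (a : ℤ) : w ^ j * w⁻¹ ^ (2 * k + 1 - j) * w ^ a = w ^ (2 * (j : ℤ) - 2 * k - 1 + a) := by
    rw [← zpow_natCast, ← zpow_natCast, inv_zpow', ← zpow_add₀ hw, ← zpow_add₀ hw]
    push_cast [hj]
    ring_nf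
  rw [neg_pow, show 2 * ((j : ℤ) - k - q - 1) = 2 * j - 2 * k - 1 + -(2 * q + 1) by ring,
    show 2 * ((j : ℤ) - k + q) = 2 * j - 2 * k - 1 + (2 * q + 1) by ring, ← hmon, ← hmon]
  ring

lemma sin_pow_mul_sin_eq_sum (x : ℝ) (k q : ℕ) :
    ((sin x ^ (2 * k + 1) * sin ((2 * q + 1) * x) : ℝ) : ℂ)
      = (Complex.I / 2) ^ (2 * k + 2) * ∑ j ∈ range (2 * k + 2), ((2 * k + 1).choose j : ℂ) * (-1) ^ j *
          (Complex.exp (x * Complex.I) ^ (2 * ((j : ℤ) - k - q - 1))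
            - Complex.exp (x * Complex.I) ^ (2 * ((j : ℤ) - k + q))) := by
  rw [← inv_sub_pow_mul_zpow_sub_zpow_eq_sum (Complex.exp_ne_zero _)]
  have h1 := Complex.sin_int_mul x 1
  have h2 := Complex.sin_int_mul x (2 * q + 1)
  rw [zpow_neg_one, zpow_one] at h1
  push_cast at h1 h2 ⊢
  rw [one_mul] at h1
  rw [h1, h2, mul_div_assoc, mul_comm, mul_pow]
  ring

lemma sum_choose_mul_ite_sub_ite {R : Type*} [CommRing R] (k q : ℕ) (c : R) :
    ∑ j ∈ range (2 * k + 2), ((2 * k + 1).choose j : R) * (-1) ^ j *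
        ((if (j : ℤ) - k - q - 1 = 0 then c else 0) - (if (j : ℤ) - k + q = 0 then c else 0))
      = if q ≤ k then 2 * (-1) ^ (k + q + 1) * (2 * k + 1).choose (k - q) * c else 0 := by
  split_ifs with hqk
  · have hlow (j : ℕ) : (j : ℤ) - k - q - 1 = 0 ↔ j = k + q + 1 := by omega
    have hhigh (j : ℕ) : (j : ℤ) - k + q = 0 ↔ j = k - q := by omega
    simp only [hlow, hhigh, mul_sub, mul_ite, mul_zero, sum_sub_distrib, sum_ite_eq', mem_range]
    rw [if_pos (by omega), if_pos (by omega),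
      Nat.choose_symm_of_eq_add (show 2 * k + 1 = k + q + 1 + (k - q) by omega),
      show k + q + 1 = k - q + 1 + 2 * q by omega, pow_add _ (k - q + 1), pow_mul, neg_one_sq]
    ring
  · refine sum_eq_zero fun j hj => ?_
    have hj : j < 2 * k + 2 := mem_range.1 hj
    rw [if_neg (by omega), if_neg (by omega), sub_zero, mul_zero]

lemma sum_sin_pow_mul_sin_eq (θ : ℝ) {m q k : ℕ} (hkq : k + q < 2 * m) :
    ∑ ℓ ∈ range (2 * m + 1), sin ((θ + 2 * π * ℓ) / (2 * m + 1)) ^ (2 * k + 1)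
        * sin ((2 * q + 1) * (θ + 2 * π * ℓ) / (2 * m + 1))
      = if q ≤ k then (2 * m + 1) * ((-1 : ℝ) ^ q / 2 ^ (2 * k + 1) * (2 * k + 1).choose (k - q))
        else 0 := by
  apply Complex.ofReal_injective
  simp_rw [Complex.ofReal_sum, mul_div_assoc (2 * (q : ℝ) + 1), sin_pow_mul_sin_eq_sum, ← mul_sum]
  rw [sum_comm]
  simp_rw [← mul_sum, sum_sub_distrib]
  rw [sum_congr rfl fun j hj => by
      have hj : j < 2 * k + 2 := mem_range.1 hj
      rw [sum_exp_zpow_two_mul (by omega), sum_exp_zpow_two_mul (by omega)],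
    sum_choose_mul_ite_sub_ite]
  split_ifs
  · have hI : (Complex.I / 2) ^ (2 * k + 2) = (-1) ^ (k + 1) / (2 * 2 ^ (2 * k + 1)) := by
      rw [div_pow, ← pow_succ', show 2 * k + 2 = 2 * (k + 1) by ring, pow_mul, Complex.I_sq]
    have hsign : (-1 : ℂ) ^ (k + 1) * (-1) ^ (k + q + 1) = (-1) ^ q := by
      rw [← pow_add, show k + 1 + (k + q + 1) = q + 2 * (k + 1) by ring, pow_add, pow_mul, neg_one_sq,
        one_pow, mul_one]
    push_cast
    rw [hI, ← hsign]
    field_simp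
  · simp

theorem stmt_19 (θ : ℝ) (m q k : ℕ) (hq : q < m) :
    (q ≤ k → k < 2 * m - q →
      (1 / (2 * m + 1 : ℝ)) * ∑ ℓ ∈ Finset.range (2 * m + 1),
          (Real.sin ((θ + 2 * Real.pi * ℓ) / (2 * m + 1))) ^ (2 * k + 1)
            * Real.sin ((2 * q + 1) * (θ + 2 * Real.pi * ℓ) / (2 * m + 1))
        = ((-1) ^ q / 2 ^ (2 * k + 1)) * (Nat.choose (2 * k + 1) (k - q) : ℝ)) ∧
    (k < q →
      (1 / (2 * m + 1 : ℝ)) * ∑ ℓ ∈ Finset.range (2 * m + 1),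
          (Real.sin ((θ + 2 * Real.pi * ℓ) / (2 * m + 1))) ^ (2 * k + 1)
            * Real.sin ((2 * q + 1) * (θ + 2 * Real.pi * ℓ) / (2 * m + 1)) = 0) := by
  refine ⟨fun hqk hk => ?_, fun hkq => ?_⟩
  · rw [sum_sin_pow_mul_sin_eq θ (by omega), if_pos hqk, ← mul_assoc, one_div_mul_cancel (by positivity),
      one_mul]
  · rw [sum_sin_pow_mul_sin_eq θ (by omega), if_neg (by omega), mul_zero]
end
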